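/- Let $\Theta_0 > 0$, $C_1 \in \mathbb{R}$, and suppose a sequence $(\beta_n)$ of positive reals satisfies $\beta_n = 2n + 1 + \sqrt{4\lambda_n + 1}$ where $\lambda_n = \beta_n(\Theta_0 - C_1 \beta_n^{-1/2} + O(\beta_n^{-1}))$ and $\beta_n \to \infty$ with $\beta_n = 2n + O(\sqrt{n})$. Then $\beta_n = 2n - 2^{3/2}\xi_0 \sqrt{n} + O(1)$ as $n \to \infty$, where $\xi_0 = -\sqrt{\Theta_0}$. -/
import Mathlib

open Filter Asymptotics

set_option maxHeartbeats 800000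

lemma sqrt_diff_le' {a b : ℝ} (ha : 0 ≤ a) (hb : 0 < b) :
    |Real.sqrt a - Real.sqrt b| ≤ |a - b| / Real.sqrt b := by
  rw [le_div_iff₀ (Real.sqrt_pos.2 hb)]
  have h : |Real.sqrt a - Real.sqrt b| * (Real.sqrt a + Real.sqrt b) = |a - b| := by
    rw [← abs_of_nonneg (by positivity : (0:ℝ) ≤ Real.sqrt a + Real.sqrt b), ← abs_mul]
    congr 1
    have h1 := Real.sq_sqrt ha
    have h2 := Real.sq_sqrt hb.le
    nlinarith
  calc |Real.sqrt a - Real.sqrt b| * Real.sqrt b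
      ≤ |Real.sqrt a - Real.sqrt b| * (Real.sqrt a + Real.sqrt b) := by
        apply mul_le_mul_of_nonneg_left _ (abs_nonneg _)
        linarith [Real.sqrt_nonneg a]
    _ = |a - b| := h

lemma sqrt8_eq : Real.sqrt 8 = 2 ^ ((3:ℝ)/2) := by
  have h : ((2:ℝ) ^ ((3:ℝ)/2)) ^ 2 = 8 := by
    rw [← Real.rpow_natCast (2 ^ ((3:ℝ)/2)) 2, ← Real.rpow_mul (by norm_num : (0:ℝ) ≤ 2)]
    norm_num
  rw [show (8:ℝ) = ((2:ℝ) ^ ((3:ℝ)/2)) ^ 2 from h.symm, Real.sqrt_sq (by positivity)]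

theorem crossing_asymptotics (Θ0 C1 : ℝ) (hΘ : 0 < Θ0) (ξ0 : ℝ)
    (hξ : ξ0 = -Real.sqrt Θ0) (β lam : ℕ → ℝ) (hpos : ∀ n, 0 < β n)
    (hSJ : ∀ n : ℕ, β n = 2 * n + 1 + Real.sqrt (4 * lam n + 1))
    (hlam : (fun n => lam n - (Θ0 * β n - C1 * Real.sqrt (β n)))
      =O[atTop] (fun _ => (1 : ℝ)))
    (htend : Tendsto β atTop atTop)
    (hgrow : (fun n => β n - 2 * n) =O[atTop] fun n : ℕ => Real.sqrt n) :
    (fun n : ℕ => β n - (2 * n - 2 ^ ((3 : ℝ) / 2) * ξ0 * Real.sqrt n))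
      =O[atTop] (fun _ => (1 : ℝ)) := by
  rw [isBigO_iff] at hlam hgrow ⊢
  obtain ⟨c1, h1⟩ := hlam
  obtain ⟨c2, h2⟩ := hgrow
  set M1 := max c1 0 with hM1
  set M2 := max c2 0 with hM2
  have hM1n : 0 ≤ M1 := le_max_right _ _
  have hM2n : 0 ≤ M2 := le_max_right _ _
  set K := 4*Θ0*M2 + 8*|C1| + 4*M1 + 1 with hKdef
  have hKpos : 0 < K := by positivity
  have hsqΘ : 0 < Real.sqrt (8*Θ0) := Real.sqrt_pos.2 (by positivity)
  refine ⟨1 + K / Real.sqrt (8*Θ0), ?_⟩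
  have hs : ∀ t : ℝ, ∀ᶠ n : ℕ in atTop, t ≤ Real.sqrt n := by
    intro t
    filter_upwards [eventually_ge_atTop ⌈t^2⌉₊] with n hn
    have ht2 : t^2 ≤ (n:ℝ) := le_trans (Nat.le_ceil _) (by exact_mod_cast hn)
    rcases le_or_gt t 0 with h|h
    · exact le_trans h (Real.sqrt_nonneg _)
    · exact (Real.le_sqrt' h).mpr ht2
  have hcond : ∀ᶠ n : ℕ in atTop,
      1 ≤ Real.sqrt n ∧ M2 ≤ Real.sqrt n ∧ K/(4*Θ0) ≤ Real.sqrt n :=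
    ((hs 1).and ((hs M2).and (hs (K/(4*Θ0)))))
  filter_upwards [h1, h2, hcond] with n hE hd hc
  obtain ⟨hsn1, hc2, hKn⟩ := hc
  set sn := Real.sqrt n with hsn
  have hsn0 : 0 < sn := lt_of_lt_of_le one_pos hsn1
  have hss : sn * sn = n := Real.mul_self_sqrt (Nat.cast_nonneg n)
  simp only [Real.norm_eq_abs, abs_one, mul_one] at hE hd ⊢
  rw [abs_of_nonneg (Real.sqrt_nonneg _)] at hd
  have hd' : |β n - 2*n| ≤ M2 * sn := le_trans hd
    (mul_le_mul_of_nonneg_right (le_max_left _ _) hsn0.le)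
  have hE' : |lam n - (Θ0 * β n - C1 * Real.sqrt (β n))| ≤ M1 := le_trans hE (le_max_left _ _)
  -- bound on sqrt (β n)
  have hβ3 : β n ≤ 4*n := by
    rw [abs_le] at hd'
    nlinarith [hd'.2, mul_le_mul_of_nonneg_right hc2 hsn0.le]
  have hsβ : Real.sqrt (β n) ≤ 2 * sn := by
    calc Real.sqrt (β n) ≤ Real.sqrt (4*n) := Real.sqrt_le_sqrt hβ3
      _ = 2 * sn := by
          rw [Real.sqrt_mul (by norm_num) (n:ℝ), show Real.sqrt 4 = 2 by
            rw [show (4:ℝ) = 2^2 by norm_num, Real.sqrt_sq (by norm_num)]]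
  set a := 4 * lam n + 1 with hadef
  set b := 8 * Θ0 * n with hbdef
  have hab : |a - b| ≤ K * sn := by
    have heq : a - b = 4*Θ0*(β n - 2*n) - 4*(C1 * Real.sqrt (β n))
        + 4*(lam n - (Θ0 * β n - C1 * Real.sqrt (β n))) + 1 := by
      rw [hadef, hbdef]; ring
    have hC : |C1 * Real.sqrt (β n)| ≤ |C1| * (2*sn) := by
      rw [abs_mul, abs_of_nonneg (Real.sqrt_nonneg _)]
      exact mul_le_mul_of_nonneg_left hsβ (abs_nonneg _)
    have hKsn : K * sn = 4*(Θ0*(M2*sn)) + 4*(|C1| * (2*sn)) + 4*(M1*sn) + sn := by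
      rw [hKdef]; ring
    rw [heq, abs_le]
    rw [abs_le] at hd' hE' hC
    constructor <;> rw [hKsn] <;>
      linarith [mul_le_mul_of_nonneg_left hd'.2 hΘ.le,
        mul_le_mul_of_nonneg_left hd'.1 hΘ.le,
        mul_le_mul_of_nonneg_left hsn1 hM1n, hC.1, hC.2, hE'.1, hE'.2, hsn1, hM1n]
  have hKle : K ≤ 4*Θ0*sn := by
    rw [div_le_iff₀ (by positivity)] at hKn
    linarith [hKn]
  have ha0 : 0 ≤ a := by
    rw [abs_le] at hab
    nlinarith [hab.1, mul_le_mul_of_nonneg_right hKle hsn0.le]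
  have hb0 : 0 < b := by
    have : (1:ℝ) ≤ n := by nlinarith
    rw [hbdef]; nlinarith
  have hsb : Real.sqrt b = Real.sqrt (8*Θ0) * sn := by
    rw [hbdef, Real.sqrt_mul (by positivity) (n:ℝ)]
  have hdiff : |Real.sqrt a - Real.sqrt b| ≤ K / Real.sqrt (8*Θ0) := by
    calc |Real.sqrt a - Real.sqrt b| ≤ |a - b| / Real.sqrt b := sqrt_diff_le' ha0 hb0
      _ ≤ (K * sn) / (Real.sqrt (8*Θ0) * sn) := by
          rw [hsb]; gcongr
      _ = K / Real.sqrt (8*Θ0) := by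
          field_simp
  have h8Θ : Real.sqrt (8*Θ0) = 2^((3:ℝ)/2) * Real.sqrt Θ0 := by
    rw [show (8:ℝ)*Θ0 = 8*Θ0 from rfl, Real.sqrt_mul (by norm_num : (0:ℝ) ≤ 8), sqrt8_eq]
  have hgoal : β n - (2*n - 2^((3:ℝ)/2) * ξ0 * sn) = 1 + (Real.sqrt a - Real.sqrt b) := by
    rw [hSJ n, ← hadef, hsb, h8Θ, hξ]; ring
  calc |β n - (2*n - 2^((3:ℝ)/2) * ξ0 * sn)| = |1 + (Real.sqrt a - Real.sqrt b)| := by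
        rw [hgoal]
    _ ≤ |(1:ℝ)| + |Real.sqrt a - Real.sqrt b| := abs_add_le 1 _
    _ ≤ 1 + K / Real.sqrt (8*Θ0) := by
        rw [abs_one]; linarith
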